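/- arXiv:math/0207182 — 4 statements merged into one kernel-verified Lean document; each statement's English description precedes it below -/
import Mathlib

section
/- Let Λ be a lattice in E = EuclideanSpace ℝ (Fin n) with minimal norm μ, let U be a subspace with orthogonal complement V = Uᗮ and orthogonal projections π_U, π_V, and let S ⊆ π_U(Λ) be a finite set such that ‖u − u'‖² ≤ β for all u, u' ∈ S. Then any two distinct points x, y of the antipode set A(S) = {π_V w : w ∈ Λ, π_U w ∈ S} satisfy ‖x − y‖² ≥ μ − β. -/
/-! Two antipodes `π_V w ≠ π_V w'` come from distinct lattice vectors, so `w - w'` is a nonzero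
lattice vector and `μ ≤ ‖w - w'‖²`. By Pythagoras this splits as
`‖π_U w - π_U w'‖² + ‖π_V w - π_V w'‖²`, and the first summand is at most `β` because
`π_U w, π_U w' ∈ S`. -/

section MinimalNorm

variable {𝕜 E : Type*} [RCLike 𝕜] [NormedAddCommGroup E] [InnerProductSpace 𝕜 E]

theorem sub_norm_sq_orthogonalProjectionOnto_sub_le_of_minimal_norm
    (Λ : AddSubgroup E) (μ : ℝ) (hμ : ∀ w ∈ Λ, w ≠ 0 → μ ≤ ‖w‖ ^ 2)
    (K : Submodule 𝕜 E) [K.HasOrthogonalProjection] {w w' : E} (hw : w ∈ Λ) (hw' : w' ∈ Λ)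
    (hne : (Kᗮ.orthogonalProjectionOnto w : E) ≠ Kᗮ.orthogonalProjectionOnto w') :
    μ - ‖(K.orthogonalProjectionOnto w - K.orthogonalProjectionOnto w' : E)‖ ^ 2 ≤
      ‖(Kᗮ.orthogonalProjectionOnto w - Kᗮ.orthogonalProjectionOnto w' : E)‖ ^ 2 := by
  have hsub : w - w' ≠ 0 := fun h => hne (by rw [sub_eq_zero.1 h])
  have hμw := hμ _ (Λ.sub_mem hw hw') hsub
  rw [K.norm_sq_eq_add_norm_sq_projection, map_sub, map_sub] at hμw
  simp only [← Submodule.coe_sub, Submodule.norm_coe]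
  linarith

end MinimalNorm

theorem antipode_separation_general {n : ℕ}
    (Λ : Submodule ℤ (EuclideanSpace ℝ (Fin n)))
    (μ : ℝ) (hμ : ∀ w ∈ Λ, w ≠ 0 → μ ≤ ‖w‖ ^ 2)
    (U : Submodule ℝ (EuclideanSpace ℝ (Fin n)))
    (S : Finset (EuclideanSpace ℝ (Fin n)))
    (β : ℝ)
    (hβ : ∀ u ∈ S, ∀ u' ∈ S, ‖u - u'‖ ^ 2 ≤ β)
    (x y : EuclideanSpace ℝ (Fin n))
    (hx : x ∈ {v : EuclideanSpace ℝ (Fin n) | ∃ w ∈ Λ,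
      (U.orthogonalProjectionOnto w : EuclideanSpace ℝ (Fin n)) ∈ S ∧
      (Uᗮ.orthogonalProjectionOnto w : EuclideanSpace ℝ (Fin n)) = v})
    (hy : y ∈ {v : EuclideanSpace ℝ (Fin n) | ∃ w ∈ Λ,
      (U.orthogonalProjectionOnto w : EuclideanSpace ℝ (Fin n)) ∈ S ∧
      (Uᗮ.orthogonalProjectionOnto w : EuclideanSpace ℝ (Fin n)) = v})
    (hxy : x ≠ y) :
    μ - β ≤ ‖x - y‖ ^ 2 := by
  obtain ⟨w, hw, hwS, rfl⟩ := hx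
  obtain ⟨w', hw', hw'S, rfl⟩ := hy
  have hsep := sub_norm_sq_orthogonalProjectionOnto_sub_le_of_minimal_norm
    Λ.toAddSubgroup μ hμ U hw hw' hxy
  linarith [hβ _ hwS _ hw'S]

/-- **Antipode construction, separation bound.**
Let `Λ` be a lattice in `E = EuclideanSpace ℝ (Fin n)` with minimal norm `μ`,
`U` a subspace with orthogonal complement `V = Uᗮ`, `π_U`, `π_V` the orthogonal
projections, and `S ⊆ π_U(Λ)` a finite set with `‖u - u'‖² ≤ β` for all
`u, u' ∈ S`.  Then any two distinct points of the antipode set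
`A(S) = {π_V w : w ∈ Λ, π_U w ∈ S}` are at squared distance at least `μ - β`. -/
theorem antipode_separation {n : ℕ}
    (Λ : Submodule ℤ (EuclideanSpace ℝ (Fin n)))
    [DiscreteTopology Λ] [IsZLattice ℝ Λ]
    (μ : ℝ) (hμ : ∀ w ∈ Λ, w ≠ 0 → μ ≤ ‖w‖ ^ 2)
    (U : Submodule ℝ (EuclideanSpace ℝ (Fin n)))
    (S : Finset (EuclideanSpace ℝ (Fin n)))
    (hSsub : ∀ u ∈ S, ∃ w ∈ Λ,
      (U.orthogonalProjectionOnto w : EuclideanSpace ℝ (Fin n)) = u)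
    (β : ℝ)
    (hβ : ∀ u ∈ S, ∀ u' ∈ S, ‖u - u'‖ ^ 2 ≤ β)
    (x y : EuclideanSpace ℝ (Fin n))
    (hx : x ∈ {v : EuclideanSpace ℝ (Fin n) | ∃ w ∈ Λ,
      (U.orthogonalProjectionOnto w : EuclideanSpace ℝ (Fin n)) ∈ S ∧
      (Uᗮ.orthogonalProjectionOnto w : EuclideanSpace ℝ (Fin n)) = v})
    (hy : y ∈ {v : EuclideanSpace ℝ (Fin n) | ∃ w ∈ Λ,
      (U.orthogonalProjectionOnto w : EuclideanSpace ℝ (Fin n)) ∈ S ∧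
      (Uᗮ.orthogonalProjectionOnto w : EuclideanSpace ℝ (Fin n)) = v})
    (hxy : x ≠ y) :
    μ - β ≤ ‖x - y‖ ^ 2 :=
  antipode_separation_general Λ μ hμ U S β hβ x y hx hy hxy
end

section
/- Let Λ be a lattice in E = EuclideanSpace ℝ (Fin n) with minimal norm μ, let U be a subspace with orthogonal complement V = Uᗮ and orthogonal projections π_U, π_V, and let S ⊆ π_U(Λ) be a finite set with ‖u − u'‖² ≤ β for all u, u' ∈ S, where 0 ≤ β ≤ μ. Then the open balls of radius ρ = (1/2)·√(μ − β) centered at the points of the antipode set A(S) = {π_V w : w ∈ Λ, π_U w ∈ S} are pairwise disjoint; that is, A(S) together with radius ρ forms a sphere packing. -/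
/-!
A nonzero difference `w - w'` of lattice vectors has squared length at least `μ`, and by
Pythagoras this splits as the squared distance of the `U`-projections, at most `β` when both lie
in `S`, plus the squared distance of the `Uᗮ`-projections. Hence distinct antipodes are at
distance at least `√(μ - β)`, so the balls of half that radius around them are disjoint.
-/

open Metric

theorem Set.Pairwise.disjoint_ball_half {X : Type*} [PseudoMetricSpace X] {s : Set X} {d : ℝ}
    (h : s.Pairwise fun x y => d ≤ dist x y) :
    s.Pairwise fun x y => Disjoint (ball x (1 / 2 * d)) (ball y (1 / 2 * d)) :=
  h.mono' fun _ _ hxy => ball_disjoint_ball (by linarith)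

theorem Submodule.sqrt_sub_le_dist_orthogonalProjectionOnto_orthogonal
    {E : Type*} [NormedAddCommGroup E] [InnerProductSpace ℝ E]
    (K : Submodule ℝ E) [K.HasOrthogonalProjection] {μ β : ℝ} {w w' : E}
    (hμ : μ ≤ ‖w - w'‖ ^ 2)
    (hβ : ‖(K.orthogonalProjectionOnto w : E) - K.orthogonalProjectionOnto w'‖ ^ 2 ≤ β) :
    √(μ - β) ≤ dist (Kᗮ.orthogonalProjectionOnto w : E) (Kᗮ.orthogonalProjectionOnto w') := by
  have hpyth := norm_sq_eq_add_norm_sq_projection (w - w') K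
  rw [Submodule.coe_norm, Submodule.coe_norm, map_sub, map_sub, Submodule.coe_sub,
    Submodule.coe_sub] at hpyth
  rw [Real.sqrt_le_iff, dist_eq_norm]
  exact ⟨norm_nonneg _, by linarith⟩

theorem antipode_packing_general {n : ℕ}
    (Λ : Submodule ℤ (EuclideanSpace ℝ (Fin n)))
    (μ : ℝ) (hμ : ∀ w ∈ Λ, w ≠ 0 → μ ≤ ‖w‖ ^ 2)
    (U : Submodule ℝ (EuclideanSpace ℝ (Fin n)))
    (S : Finset (EuclideanSpace ℝ (Fin n)))
    (β : ℝ)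
    (hβ : ∀ u ∈ S, ∀ u' ∈ S, ‖u - u'‖ ^ 2 ≤ β) :
    ({v : EuclideanSpace ℝ (Fin n) | ∃ w ∈ Λ,
        (Submodule.orthogonalProjectionOnto U w : EuclideanSpace ℝ (Fin n)) ∈ S ∧
        (Submodule.orthogonalProjectionOnto Uᗮ w : EuclideanSpace ℝ (Fin n)) = v}).Pairwise
      (fun x y => Disjoint
        (Metric.ball x ((1 / 2) * Real.sqrt (μ - β)))
        (Metric.ball y ((1 / 2) * Real.sqrt (μ - β)))) := by
  refine Set.Pairwise.disjoint_ball_half ?_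
  rintro _ ⟨w, hw, hwS, rfl⟩ _ ⟨w', hw', hw'S, rfl⟩ hne
  have hww' : w - w' ≠ 0 := sub_ne_zero.2 fun h => hne (h ▸ rfl)
  exact U.sqrt_sub_le_dist_orthogonalProjectionOnto_orthogonal
    (hμ _ (Λ.sub_mem hw hw') hww') (hβ _ hwS _ hw'S)

/-- **Antipode construction gives a sphere packing.**
Let `Λ` be a lattice in `E = EuclideanSpace ℝ (Fin n)` with minimal norm `μ`,
`U` a subspace with orthogonal complement `V = Uᗮ`, and `S ⊆ π_U(Λ)` a finite
set with `‖u - u'‖² ≤ β` for all `u, u' ∈ S`, where `0 ≤ β ≤ μ`.  Then the open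
balls of radius `ρ = (1/2)·√(μ - β)` centered at the points of the antipode set
`A(S)` are pairwise disjoint. -/
theorem antipode_packing {n : ℕ}
    (Λ : Submodule ℤ (EuclideanSpace ℝ (Fin n)))
    [DiscreteTopology Λ] [IsZLattice ℝ Λ]
    (μ : ℝ) (hμ : ∀ w ∈ Λ, w ≠ 0 → μ ≤ ‖w‖ ^ 2)
    (U : Submodule ℝ (EuclideanSpace ℝ (Fin n)))
    (S : Finset (EuclideanSpace ℝ (Fin n)))
    (hSsub : ∀ u ∈ S, ∃ w ∈ Λ,
      (Submodule.orthogonalProjectionOnto U w : EuclideanSpace ℝ (Fin n)) = u)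
    (β : ℝ) (hβ0 : 0 ≤ β) (hβμ : β ≤ μ)
    (hβ : ∀ u ∈ S, ∀ u' ∈ S, ‖u - u'‖ ^ 2 ≤ β) :
    ({v : EuclideanSpace ℝ (Fin n) | ∃ w ∈ Λ,
        (Submodule.orthogonalProjectionOnto U w : EuclideanSpace ℝ (Fin n)) ∈ S ∧
        (Submodule.orthogonalProjectionOnto Uᗮ w : EuclideanSpace ℝ (Fin n)) = v}).Pairwise
      (fun x y => Disjoint
        (Metric.ball x ((1 / 2) * Real.sqrt (μ - β)))
        (Metric.ball y ((1 / 2) * Real.sqrt (μ - β)))) :=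
  antipode_packing_general Λ μ hμ U S β hβ
end

section
/- Let Λ be a lattice in E = EuclideanSpace ℝ (Fin n) with minimal norm μ, let U be a subspace with orthogonal complement V = Uᗮ and orthogonal projections π_U, π_V, and let S ⊆ π_U(Λ) be a finite set with ‖u − u'‖² ≤ β for all u, u' ∈ S, where β < μ. Then for distinct u, u' ∈ S the fibers {π_V w : w ∈ Λ, π_U w = u} and {π_V w : w ∈ Λ, π_U w = u'} are disjoint; hence the antipode set A(S) is a disjoint union of exactly |S| cosets of L = Λ ∩ V. -/
/-!
Two lattice vectors with the same `V`-component differ by a lattice vector lying in `U`, namely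
the difference of their `U`-components. If those components are distinct points of `S`, this
nonzero lattice vector has squared norm at most `β < μ`, contradicting minimality of `μ`.
Similarly, two lattice vectors with the same `U`-component differ by a vector of `L = Λ ∩ V`,
so each fiber is a single coset of `L`.
-/

namespace Submodule

variable {E : Type*} [NormedAddCommGroup E] [InnerProductSpace ℝ E]
  (Λ : Submodule ℤ E) (U : Submodule ℝ E) [U.HasOrthogonalProjection]

def projFiber (u : E) : Set E :=
  {v | ∃ w ∈ Λ, (U.orthogonalProjectionOnto w : E) = u ∧ (Uᗮ.orthogonalProjectionOnto w : E) = v}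

/-- The antipode set `A(S)`. -/
def antipodeSet (S : Set E) : Set E :=
  {v | ∃ w ∈ Λ, (U.orthogonalProjectionOnto w : E) ∈ S ∧ (Uᗮ.orthogonalProjectionOnto w : E) = v}

theorem antipodeSet_eq_biUnion_projFiber (S : Set E) :
    antipodeSet Λ U S = ⋃ u ∈ S, projFiber Λ U u := by
  ext v
  simp only [antipodeSet, projFiber, Set.mem_ofPred_eq, Set.mem_iUnion]
  constructor
  · rintro ⟨w, hw, hwS, hwv⟩
    exact ⟨_, hwS, w, hw, rfl, hwv⟩
  · rintro ⟨u, hu, w, hw, rfl, hwv⟩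
    exact ⟨w, hw, hu, hwv⟩

variable {U}

theorem sub_eq_sub_orthogonalProjectionOnto_add_sub_orthogonalProjectionOnto (w w' : E) :
    w - w' = ((U.orthogonalProjectionOnto w : E) - U.orthogonalProjectionOnto w') +
      ((Uᗮ.orthogonalProjectionOnto w : E) - Uᗮ.orthogonalProjectionOnto w') := by
  conv_lhs => rw [← U.starProjection_add_starProjection_orthogonal w,
    ← U.starProjection_add_starProjection_orthogonal w']
  simp only [starProjection_apply]
  abel

variable {Λ}

theorem disjoint_projFiber {μ : ℝ} (hμ : ∀ w ∈ Λ, w ≠ 0 → μ ≤ ‖w‖ ^ 2) {u u' : E}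
    (hlt : ‖u - u'‖ ^ 2 < μ) (hne : u ≠ u') :
    Disjoint (projFiber Λ U u) (projFiber Λ U u') := by
  rw [Set.disjoint_left]
  rintro v ⟨w, hw, rfl, rfl⟩ ⟨w', hw', rfl, hvw'⟩
  have hdiff : w - w' = (U.orthogonalProjectionOnto w : E) - U.orthogonalProjectionOnto w' := by
    rw [sub_eq_sub_orthogonalProjectionOnto_add_sub_orthogonalProjectionOnto (U := U) w w',
      hvw', sub_self, add_zero]
  have hdiff_ne : w - w' ≠ 0 := by
    rw [hdiff]
    exact sub_ne_zero.mpr hne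
  have := hμ _ (sub_mem hw hw') hdiff_ne
  rw [hdiff] at this
  linarith

theorem projFiber_eq_image {w₀ : E} (hw₀ : w₀ ∈ Λ) :
    projFiber Λ U (U.orthogonalProjectionOnto w₀) =
      ((Uᗮ.orthogonalProjectionOnto w₀ : E) + ·) '' {l | l ∈ Λ ∧ l ∈ Uᗮ} := by
  ext v
  constructor
  · rintro ⟨w, hw, hwu, rfl⟩
    have hdiff : w - w₀ =
        (Uᗮ.orthogonalProjectionOnto w : E) - Uᗮ.orthogonalProjectionOnto w₀ := by
      rw [sub_eq_sub_orthogonalProjectionOnto_add_sub_orthogonalProjectionOnto (U := U) w w₀,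
        hwu, sub_self, zero_add]
    refine ⟨w - w₀, ⟨sub_mem hw hw₀, ?_⟩, by rw [hdiff]; exact add_sub_cancel _ _⟩
    rw [hdiff]
    exact sub_mem (coe_mem _) (coe_mem _)
  · rintro ⟨l, ⟨hlΛ, hlV⟩, rfl⟩
    refine ⟨w₀ + l, add_mem hw₀ hlΛ, ?_, ?_⟩
    · rw [map_add, orthogonalProjectionOnto_eq_zero_iff.mpr hlV, add_zero]
    · rw [map_add, coe_add, ← starProjection_apply Uᗮ l, starProjection_eq_self_iff.mpr hlV]

end Submodule

open Submodule in
theorem antipode_fibers_disjoint_general {n : ℕ}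
    (Λ : Submodule ℤ (EuclideanSpace ℝ (Fin n)))
    (μ : ℝ) (hμ : ∀ w ∈ Λ, w ≠ 0 → μ ≤ ‖w‖ ^ 2)
    (U : Submodule ℝ (EuclideanSpace ℝ (Fin n)))
    (S : Finset (EuclideanSpace ℝ (Fin n)))
    (hSsub : ∀ u ∈ S, ∃ w ∈ Λ,
      (Submodule.orthogonalProjectionOnto U w : EuclideanSpace ℝ (Fin n)) = u)
    (β : ℝ) (hβμ : β < μ)
    (hβ : ∀ u ∈ S, ∀ u' ∈ S, ‖u - u'‖ ^ 2 ≤ β) :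
    (∀ u ∈ S, ∀ u' ∈ S, u ≠ u' →
      Disjoint
        {v : EuclideanSpace ℝ (Fin n) | ∃ w ∈ Λ,
          (Submodule.orthogonalProjectionOnto U w : EuclideanSpace ℝ (Fin n)) = u ∧
          (Submodule.orthogonalProjectionOnto Uᗮ w : EuclideanSpace ℝ (Fin n)) = v}
        {v : EuclideanSpace ℝ (Fin n) | ∃ w ∈ Λ,
          (Submodule.orthogonalProjectionOnto U w : EuclideanSpace ℝ (Fin n)) = u' ∧
          (Submodule.orthogonalProjectionOnto Uᗮ w : EuclideanSpace ℝ (Fin n)) = v}) ∧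
    (∀ u ∈ S, ∃ v₀ : EuclideanSpace ℝ (Fin n),
      {v : EuclideanSpace ℝ (Fin n) | ∃ w ∈ Λ,
          (Submodule.orthogonalProjectionOnto U w : EuclideanSpace ℝ (Fin n)) = u ∧
          (Submodule.orthogonalProjectionOnto Uᗮ w : EuclideanSpace ℝ (Fin n)) = v}
        = (fun l => v₀ + l) '' {l : EuclideanSpace ℝ (Fin n) | l ∈ Λ ∧ l ∈ Uᗮ}) ∧
    {v : EuclideanSpace ℝ (Fin n) | ∃ w ∈ Λ,
        (Submodule.orthogonalProjectionOnto U w : EuclideanSpace ℝ (Fin n)) ∈ S ∧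
        (Submodule.orthogonalProjectionOnto Uᗮ w : EuclideanSpace ℝ (Fin n)) = v}
      = ⋃ u ∈ S, {v : EuclideanSpace ℝ (Fin n) | ∃ w ∈ Λ,
          (Submodule.orthogonalProjectionOnto U w : EuclideanSpace ℝ (Fin n)) = u ∧
          (Submodule.orthogonalProjectionOnto Uᗮ w : EuclideanSpace ℝ (Fin n)) = v} := by
  refine ⟨fun u hu u' hu' hne => ?_, fun u hu => ?_, antipodeSet_eq_biUnion_projFiber Λ U S⟩
  · exact disjoint_projFiber hμ ((hβ u hu u' hu').trans_lt hβμ) hne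
  · obtain ⟨w₀, hw₀, rfl⟩ := hSsub u hu
    exact ⟨_, projFiber_eq_image hw₀⟩

/-- **Fibers over distinct elements of `S` are disjoint when `β < μ`.**
Let `Λ` be a lattice in `E = EuclideanSpace ℝ (Fin n)` with minimal norm `μ`,
and `S ⊆ π_U(Λ)` finite with `‖u − u'‖² ≤ β` for all `u, u' ∈ S`, where
`β < μ`.  Then for distinct `u, u' ∈ S` the fibers
`{π_V w : w ∈ Λ, π_U w = u}` and `{π_V w : w ∈ Λ, π_U w = u'}` are disjoint;
hence `A(S)` is the disjoint union of exactly `|S|` cosets of `L = Λ ∩ V`. -/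
theorem antipode_fibers_disjoint {n : ℕ}
    (Λ : Submodule ℤ (EuclideanSpace ℝ (Fin n)))
    [DiscreteTopology Λ] [IsZLattice ℝ Λ]
    (μ : ℝ) (hμ : ∀ w ∈ Λ, w ≠ 0 → μ ≤ ‖w‖ ^ 2)
    (U : Submodule ℝ (EuclideanSpace ℝ (Fin n)))
    (S : Finset (EuclideanSpace ℝ (Fin n)))
    (hSsub : ∀ u ∈ S, ∃ w ∈ Λ,
      (Submodule.orthogonalProjectionOnto U w : EuclideanSpace ℝ (Fin n)) = u)
    (β : ℝ) (hβμ : β < μ)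
    (hβ : ∀ u ∈ S, ∀ u' ∈ S, ‖u - u'‖ ^ 2 ≤ β) :
    (∀ u ∈ S, ∀ u' ∈ S, u ≠ u' →
      Disjoint
        {v : EuclideanSpace ℝ (Fin n) | ∃ w ∈ Λ,
          (Submodule.orthogonalProjectionOnto U w : EuclideanSpace ℝ (Fin n)) = u ∧
          (Submodule.orthogonalProjectionOnto Uᗮ w : EuclideanSpace ℝ (Fin n)) = v}
        {v : EuclideanSpace ℝ (Fin n) | ∃ w ∈ Λ,
          (Submodule.orthogonalProjectionOnto U w : EuclideanSpace ℝ (Fin n)) = u' ∧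
          (Submodule.orthogonalProjectionOnto Uᗮ w : EuclideanSpace ℝ (Fin n)) = v}) ∧
    (∀ u ∈ S, ∃ v₀ : EuclideanSpace ℝ (Fin n),
      {v : EuclideanSpace ℝ (Fin n) | ∃ w ∈ Λ,
          (Submodule.orthogonalProjectionOnto U w : EuclideanSpace ℝ (Fin n)) = u ∧
          (Submodule.orthogonalProjectionOnto Uᗮ w : EuclideanSpace ℝ (Fin n)) = v}
        = (fun l => v₀ + l) '' {l : EuclideanSpace ℝ (Fin n) | l ∈ Λ ∧ l ∈ Uᗮ}) ∧
    {v : EuclideanSpace ℝ (Fin n) | ∃ w ∈ Λ,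
        (Submodule.orthogonalProjectionOnto U w : EuclideanSpace ℝ (Fin n)) ∈ S ∧
        (Submodule.orthogonalProjectionOnto Uᗮ w : EuclideanSpace ℝ (Fin n)) = v}
      = ⋃ u ∈ S, {v : EuclideanSpace ℝ (Fin n) | ∃ w ∈ Λ,
          (Submodule.orthogonalProjectionOnto U w : EuclideanSpace ℝ (Fin n)) = u ∧
          (Submodule.orthogonalProjectionOnto Uᗮ w : EuclideanSpace ℝ (Fin n)) = v} :=
  antipode_fibers_disjoint_general Λ μ hμ U S hSsub β hβμ hβ
end

section
/- Let Λ be a lattice in E = EuclideanSpace ℝ (Fin n) that is self-dual (unimodular), meaning that x ∈ Λ if and only if ⟪x, y⟫ ∈ ℤ for all y ∈ Λ. Let U be a subspace with orthogonal projection π_U, and suppose K = Λ ∩ U spans U over ℝ. Then the projection π_U(Λ) equals the dual lattice of K inside U, i.e. π_U(Λ) = {x ∈ U : ⟪x, k⟫ ∈ ℤ for all k ∈ K}. -/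
/-!
Projections of lattice vectors pair with `K = Λ ∩ U` as the vectors themselves do, which gives one
inclusion. Conversely, let `x ∈ U` be integral on `K`. Since `Λ ⧸ K` embeds into `E ⧸ U`, it is
torsion-free, hence free, so the `ℤ`-valued functional `⟪x, ·⟫` on `K` extends to a `ℤ`-valued
functional on `Λ`. By self-duality that functional is `⟪w, ·⟫` for some `w ∈ Λ`; then `w - x` is
orthogonal to `K`, hence to `U = span K`, and so `π_U w = x`.
-/

open Module

theorem Submodule.exists_extend_of_projective_quotient {R M N : Type*} [Ring R] [AddCommGroup M]
    [Module R M] [AddCommGroup N] [Module R N] {p : Submodule R M} [Projective R (M ⧸ p)]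
    (f : p →ₗ[R] N) : ∃ g : M →ₗ[R] N, g ∘ₗ p.subtype = f := by
  obtain ⟨s, hs⟩ := p.mkQ.exists_rightInverse_of_surjective p.range_mkQ
  have hmem (m : M) : m - s (p.mkQ m) ∈ p := by
    rw [← Quotient.mk_eq_zero, Quotient.mk_sub, ← p.mkQ_apply, ← p.mkQ_apply,
      ← LinearMap.comp_apply p.mkQ s, hs, LinearMap.id_apply, sub_self]
  refine ⟨f ∘ₗ LinearMap.codRestrict p (LinearMap.id - s ∘ₗ p.mkQ) hmem, ?_⟩
  ext ⟨m, hm⟩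
  have hm0 : p.mkQ m = 0 := (Quotient.mk_eq_zero p).2 hm
  exact congrArg f (Subtype.ext (by simp [hm0]))

theorem Submodule.isTorsionFree_quotient_comap_restrictScalars {K V : Type*} [Field K] [CharZero K]
    [AddCommGroup V] [Module K V] (Λ : Submodule ℤ V) (U : Submodule K V) :
    IsTorsionFree ℤ (Λ ⧸ (U.restrictScalars ℤ).comap Λ.subtype) := by
  have : IsTorsionFree ℤ (V ⧸ U) := IsTorsionFree.trans K
  let f : Λ →ₗ[ℤ] V ⧸ U := U.mkQ.restrictScalars ℤ ∘ₗ Λ.subtype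
  have hker : (U.restrictScalars ℤ).comap Λ.subtype = LinearMap.ker f := by
    ext
    simp [f]
  exact Function.Injective.moduleIsTorsionFree _
    (LinearMap.ker_eq_bot.1 (ker_liftQ_eq_bot' _ f hker)) (map_smul _)

theorem LinearMap.exists_lift_of_forall_eq_intCast {M R : Type*} [AddCommGroup M] [Ring R]
    [CharZero R] (f : M →ₗ[ℤ] R) (hf : ∀ m, ∃ k : ℤ, f m = k) :
    ∃ g : M →ₗ[ℤ] ℤ, ∀ m, (g m : R) = f m := by
  choose g hg using hf
  refine ⟨{ toFun := g, map_add' := fun a b => ?_, map_smul' := fun k a => ?_ },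
    fun m => (hg m).symm⟩
  · exact_mod_cast (by rw [← hg, ← hg, ← hg, map_add] : ((g (a + b) : ℤ) : R) = g a + g b)
  · exact_mod_cast (by rw [← hg, ← hg, map_zsmul, zsmul_eq_mul] : ((g (k • a) : ℤ) : R) = k * g a)

theorem ZLattice.exists_linearMap_extend (K : Type*) {E F : Type*} [NormedField K] [LinearOrder K]
    [IsStrictOrderedRing K] [HasSolidNorm K] [FloorRing K] [NormedAddCommGroup E] [NormedSpace K E]
    [FiniteDimensional K E] [ProperSpace E] [AddCommGroup F] [Module K F]
    (L : Submodule ℤ E) [DiscreteTopology L] [IsZLattice K L] (ψ : L →ₗ[ℤ] F) :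
    ∃ f : E →ₗ[K] F, ∀ y : L, f y = ψ y := by
  have := module_free K L
  let b := Free.chooseBasis ℤ L
  let f := (b.ofZLatticeBasis K L).constr K (ψ ∘ b)
  have hf : f.toAddMonoidHom.toIntLinearMap ∘ₗ L.subtype = ψ := b.ext fun i => by
    change f (b i : E) = ψ (b i)
    rw [← b.ofZLatticeBasis_apply K L, Basis.constr_basis, Function.comp_apply]
  exact ⟨f, LinearMap.congr_fun hf⟩

theorem ZLattice.exists_mem_inner_eq_of_dual_subset {E : Type*} [NormedAddCommGroup E]
    [InnerProductSpace ℝ E] [FiniteDimensional ℝ E] (L : Submodule ℤ E) [DiscreteTopology L]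
    [IsZLattice ℝ L] (hdual : ∀ x : E, (∀ y ∈ L, ∃ m : ℤ, inner ℝ x y = (m : ℝ)) → x ∈ L)
    (ψ : L →ₗ[ℤ] ℤ) : ∃ w ∈ L, ∀ y : L, inner ℝ w (y : E) = ψ y := by
  obtain ⟨f, hf⟩ := exists_linearMap_extend ℝ L ((Int.castAddHom ℝ).toIntLinearMap ∘ₗ ψ)
  set w := (InnerProductSpace.toDual ℝ E).symm (LinearMap.toContinuousLinearMap f)
  have hw (y : L) : inner ℝ w (y : E) = ψ y := by
    rw [InnerProductSpace.toDual_symm_apply]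
    exact hf y
  exact ⟨w, hdual w fun y hy => ⟨ψ ⟨y, hy⟩, hw ⟨y, hy⟩⟩, hw⟩

/-- **Projection of a self-dual lattice is the dual of the section.**
Let `Λ` be a self-dual (unimodular) lattice in `E = EuclideanSpace ℝ (Fin n)`:
`x ∈ Λ ↔ ⟪x, y⟫ ∈ ℤ` for all `y ∈ Λ`.  Let `U` be a subspace with orthogonal
projection `π_U`, and suppose `K = Λ ∩ U` spans `U` over `ℝ`.  Then
`π_U(Λ) = {x ∈ U : ⟪x, k⟫ ∈ ℤ for all k ∈ K}`. -/
theorem projection_of_selfdual_is_dual {n : ℕ}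
    (Λ : Submodule ℤ (EuclideanSpace ℝ (Fin n)))
    [DiscreteTopology Λ] [IsZLattice ℝ Λ]
    (hself : ∀ x : EuclideanSpace ℝ (Fin n),
      x ∈ Λ ↔ ∀ y ∈ Λ, ∃ m : ℤ, (inner ℝ x y : ℝ) = (m : ℝ))
    (U : Submodule ℝ (EuclideanSpace ℝ (Fin n)))
    (hK : Submodule.span ℝ {k : EuclideanSpace ℝ (Fin n) | k ∈ Λ ∧ k ∈ U} = U) :
    {v : EuclideanSpace ℝ (Fin n) | ∃ w ∈ Λ,
        (U.orthogonalProjection w : EuclideanSpace ℝ (Fin n)) = v}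
      = {x : EuclideanSpace ℝ (Fin n) | x ∈ U ∧
          ∀ k : EuclideanSpace ℝ (Fin n), k ∈ Λ → k ∈ U →
            ∃ m : ℤ, (inner ℝ x k : ℝ) = (m : ℝ)} := by
  ext x
  constructor
  · rintro ⟨w, hw, rfl⟩
    refine ⟨Submodule.coe_mem _, fun k hkΛ hkU => ?_⟩
    have hproj := U.inner_orthogonalProjectionOnto_eq_of_mem_right ⟨k, hkU⟩ w
    rw [Submodule.coe_inner] at hproj
    exact hproj ▸ (hself w).1 hw k hkΛ
  · rintro ⟨hxU, hint⟩
    let K : Submodule ℤ Λ := (U.restrictScalars ℤ).comap Λ.subtype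
    have := Submodule.isTorsionFree_quotient_comap_restrictScalars Λ U
    obtain ⟨φ, hφ⟩ := LinearMap.exists_lift_of_forall_eq_intCast
      ((innerₗ _ x).restrictScalars ℤ ∘ₗ Λ.subtype ∘ₗ K.subtype) fun k => hint _ k.1.2 k.2
    obtain ⟨ψ, hψ⟩ := Submodule.exists_extend_of_projective_quotient φ
    obtain ⟨w, hwΛ, hw⟩ := ZLattice.exists_mem_inner_eq_of_dual_subset Λ (fun y => (hself y).2) ψ
    have horth : w - x ∈ Uᗮ := by
      rw [← hK]
      refine Submodule.isOrtho_iff_le.1 (Submodule.isOrtho_span.2 ?_)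
        (Submodule.mem_span_singleton_self _)
      rintro _ rfl k ⟨hkΛ, hkU⟩
      have hψx : (ψ ⟨k, hkΛ⟩ : ℝ) = inner ℝ x k :=
        (congrArg Int.cast (LinearMap.congr_fun hψ ⟨⟨k, hkΛ⟩, hkU⟩)).trans (hφ _)
      rw [inner_sub_left, hw ⟨k, hkΛ⟩, hψx, sub_self]
    exact ⟨w, hwΛ, Submodule.eq_starProjection_of_mem_orthogonal hxU horth⟩
end
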